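/- With the assumptions of the previous statement and additionally a lower bound ‖u - u_h‖_{Ω_e} ≥ c h^{k+1+d/2} with c > 0, there exists h₀ > 0 such that for all 0 < h < h₀, the ratio E_e / ‖u - u_h‖_{Ω_e} lies in [1/2, 3/2], i.e., the estimator is asymptotically efficient and reliable. -/
import Mathlib


/-- Asymptotic efficiency and reliability of the estimator: if for every
`h ∈ (0,1)` the error of the family of approximations satisfies
`c h^(k+1+d/2) ≤ ‖u(h) - u_h(h)‖ ≤ C h^(k+1+d/2)` and the postprocessed
solution satisfies `‖u(h) - u*(h)‖ ≤ C* h^(k+2+d/2)`, then there is `h₀ > 0`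
such that for all `0 < h < h₀` (with `h < 1`) the ratio
`E_e/‖u - u_h‖ = ‖u* - u_h‖/‖u - u_h‖` lies in `[1/2, 3/2]`. -/
theorem stmt15_estimator_efficiency
    {V : Type*} [NormedAddCommGroup V] [NormedSpace ℝ V]
    (u uh ustar : ℝ → V) (d k : ℕ) (c C Cs : ℝ)
    (hc : 0 < c) (hC : 0 < C) (hCs : 0 < Cs)
    (hlow : ∀ h ∈ Set.Ioo (0:ℝ) 1, c * h ^ ((k : ℝ) + 1 + (d : ℝ) / 2) ≤ ‖u h - uh h‖)
    (hupp : ∀ h ∈ Set.Ioo (0:ℝ) 1, ‖u h - uh h‖ ≤ C * h ^ ((k : ℝ) + 1 + (d : ℝ) / 2))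
    (hpost : ∀ h ∈ Set.Ioo (0:ℝ) 1, ‖u h - ustar h‖ ≤ Cs * h ^ ((k : ℝ) + 2 + (d : ℝ) / 2)) :
    ∃ h0 > 0, ∀ h : ℝ, 0 < h → h < h0 → h < 1 →
      ‖ustar h - uh h‖ / ‖u h - uh h‖ ∈ Set.Icc (1/2 : ℝ) (3/2 : ℝ) := by
  refine ⟨c / (2 * Cs), by positivity, fun h hpos hlt h1 => ?_⟩
  have hmem : h ∈ Set.Ioo (0:ℝ) 1 := ⟨hpos, h1⟩
  set p : ℝ := (k : ℝ) + 1 + (d : ℝ) / 2 with hp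
  have hppos : (0:ℝ) < h ^ p := Real.rpow_pos_of_pos hpos p
  have hElow := hlow h hmem
  have hEpos : 0 < ‖u h - uh h‖ := lt_of_lt_of_le (by positivity) hElow
  -- key: ‖u - u*‖ ≤ (1/2) ‖u - u_h‖
  have hsplit : h ^ ((k : ℝ) + 2 + (d : ℝ) / 2) = h * h ^ p := by
    rw [hp, show (k : ℝ) + 2 + (d : ℝ) / 2 = 1 + ((k : ℝ) + 1 + (d : ℝ) / 2) by ring,
      Real.rpow_add hpos, Real.rpow_one]
  have hkey : ‖u h - ustar h‖ ≤ (1/2) * ‖u h - uh h‖ := by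
    have h1 : ‖u h - ustar h‖ ≤ Cs * (h * h ^ p) := by
      have := hpost h hmem; rwa [hsplit] at this
    have h2 : Cs * h ≤ c / 2 := by
      have : h ≤ c / (2 * Cs) := le_of_lt hlt
      calc Cs * h ≤ Cs * (c / (2 * Cs)) := by nlinarith
        _ = c / 2 := by field_simp
    calc ‖u h - ustar h‖ ≤ Cs * h * h ^ p := by linarith [h1]; 
      _ ≤ (c / 2) * h ^ p := by nlinarith
      _ ≤ (1/2) * ‖u h - uh h‖ := by nlinarith
  -- triangle inequalities
  have htri1 : ‖ustar h - uh h‖ ≤ ‖u h - uh h‖ + ‖u h - ustar h‖ := by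
    have := norm_sub_le_norm_sub_add_norm_sub (ustar h) (u h) (uh h)
    calc ‖ustar h - uh h‖ ≤ ‖ustar h - u h‖ + ‖u h - uh h‖ := norm_sub_le_norm_sub_add_norm_sub _ _ _
      _ = ‖u h - uh h‖ + ‖u h - ustar h‖ := by rw [norm_sub_rev]; ring
  have htri2 : ‖u h - uh h‖ ≤ ‖ustar h - uh h‖ + ‖u h - ustar h‖ := by
    calc ‖u h - uh h‖ ≤ ‖u h - ustar h‖ + ‖ustar h - uh h‖ := norm_sub_le_norm_sub_add_norm_sub _ _ _
      _ = ‖ustar h - uh h‖ + ‖u h - ustar h‖ := by ring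
  constructor
  · rw [le_div_iff₀ hEpos]; linarith
  · rw [div_le_iff₀ hEpos]; linarith
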